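/- Let φ : ℤ/32ℤ → ℤ/32ℤ be the map φ(x) = x + 8 if x is odd and φ(x) = x if x is even. For every subset T ⊆ ℤ/32ℤ all of whose elements are even, φ is a graph isomorphism from the circulant graph C₃₂({1,15} ∪ T) to the circulant graph C₃₂({7,9} ∪ T). -/

import Mathlib

open Pointwise

/-- The circulant graph `Cₙ(R)`: vertices are `ZMod n`, and distinct `u v` are
adjacent iff `u - v ∈ R` or `v - u ∈ R`. -/
def circulantGraph (n : ℕ) (R : Set (ZMod n)) : SimpleGraph (ZMod n) where
  Adj u v := u ≠ v ∧ (u - v ∈ R ∨ v - u ∈ R)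
  symm := ⟨fun u v h => ⟨h.1.symm, h.2.symm⟩⟩
  loopless := ⟨fun u h => h.1 rfl⟩

/-- The map `φ(x) = x + 8` if `x` is odd, `φ(x) = x` if `x` is even,
where parity refers to the canonical representative in `{0, …, 31}`. -/
def phi : ZMod 32 → ZMod 32 := fun x => if x.val % 2 = 1 then x + 8 else x

/-! The map `φ` preserves parity and is injective. It leaves a difference `u - v` of even
parity unchanged and moves an odd one by `±8`. Both symmetric connection sets `±{1, 15}` and
`±{7, 9}` consist of odd elements, and `±{7, 9} = ±{1, 15} + 8 = ±{1, 15} - 8`, while `T ∪ -T`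
has only even elements; hence `u - v` is a connection of the first graph iff `φ u - φ v` is one
of the second. -/

theorem circulantGraph_adj_iff {n : ℕ} {R : Set (ZMod n)} {u v : ZMod n} :
    (circulantGraph n R).Adj u v ↔ u ≠ v ∧ u - v ∈ R ∪ -R := by
  rw [Set.mem_union, Set.mem_neg, neg_sub]
  rfl

theorem circulantGraph_adj_iff_adj_of_sub_mem_iff {n : ℕ} {R R' : Set (ZMod n)}
    {f : ZMod n → ZMod n} (hf : f.Injective)
    (h : ∀ u v, u - v ∈ R ∪ -R ↔ f u - f v ∈ R' ∪ -R') (u v : ZMod n) :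
    (circulantGraph n R).Adj u v ↔ (circulantGraph n R').Adj (f u) (f v) := by
  simp only [circulantGraph_adj_iff, hf.ne_iff, h]

namespace ZMod

variable {n : ℕ} [NeZero n]

theorem val_add_mod_two (hn : 2 ∣ n) (a b : ZMod n) :
    (a + b).val % 2 = (a.val + b.val) % 2 := by
  rw [val_add, Nat.mod_mod_of_dvd _ hn]

theorem val_sub_mod_two_eq_zero_iff (hn : 2 ∣ n) (a b : ZMod n) :
    (a - b).val % 2 = 0 ↔ a.val % 2 = b.val % 2 := by
  have := val_add_mod_two hn (a - b) b
  rw [sub_add_cancel] at this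
  omega

theorem val_neg_mod_two (hn : 2 ∣ n) (a : ZMod n) : (-a).val % 2 = a.val % 2 := by
  have := val_add_mod_two hn a (-a)
  rw [add_neg_cancel, val_zero] at this
  omega

end ZMod

def oddShift {n : ℕ} (s x : ZMod n) : ZMod n := if x.val % 2 = 1 then x + s else x

section OddShift

variable {n : ℕ} [NeZero n]

theorem val_oddShift_mod_two (hn : 2 ∣ n) {s : ZMod n} (hs : s.val % 2 = 0) (x : ZMod n) :
    (oddShift s x).val % 2 = x.val % 2 := by
  unfold oddShift
  split_ifs
  · rw [ZMod.val_add_mod_two hn]; omega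
  · rfl

theorem oddShift_injective (hn : 2 ∣ n) {s : ZMod n} (hs : s.val % 2 = 0) :
    Function.Injective (oddShift s) := by
  intro x y hxy
  have hpar := val_oddShift_mod_two hn hs x
  rw [hxy, val_oddShift_mod_two hn hs] at hpar
  unfold oddShift at hxy
  split_ifs at hxy <;> first | omega | exact add_right_cancel hxy

theorem oddShift_sub_oddShift_of_even (hn : 2 ∣ n) (s : ZMod n) {u v : ZMod n}
    (h : (u - v).val % 2 = 0) :
    oddShift s u - oddShift s v = u - v := by
  rw [ZMod.val_sub_mod_two_eq_zero_iff hn] at h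
  unfold oddShift
  split_ifs <;> first | omega | abel

theorem oddShift_sub_oddShift_of_odd (hn : 2 ∣ n) (s : ZMod n) {u v : ZMod n}
    (h : (u - v).val % 2 = 1) :
    oddShift s u - oddShift s v = u - v + s ∨ oddShift s u - oddShift s v = u - v - s := by
  have : u.val % 2 ≠ v.val % 2 := by rw [Ne, ← ZMod.val_sub_mod_two_eq_zero_iff hn]; omega
  unfold oddShift
  split_ifs
  · omega
  · left; abel
  · right; abel
  · omega

theorem val_oddShift_sub_oddShift_mod_two (hn : 2 ∣ n) {s : ZMod n} (hs : s.val % 2 = 0)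
    (u v : ZMod n) : (oddShift s u - oddShift s v).val % 2 = (u - v).val % 2 := by
  have h := ZMod.val_sub_mod_two_eq_zero_iff hn (oddShift s u) (oddShift s v)
  rw [val_oddShift_mod_two hn hs, val_oddShift_mod_two hn hs,
    ← ZMod.val_sub_mod_two_eq_zero_iff hn] at h
  omega

end OddShift

abbrev S₁ : Set (ZMod 32) := {1, 15} ∪ -{1, 15}
abbrev S₂ : Set (ZMod 32) := {7, 9} ∪ -{7, 9}

theorem val_mod_two_of_mem_S₁ : ∀ d ∈ S₁, d.val % 2 = 1 := by
  simp only [Set.mem_union, Set.mem_neg, Set.mem_insert_iff, Set.mem_singleton_iff]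
  decide

theorem val_mod_two_of_mem_S₂ : ∀ d ∈ S₂, d.val % 2 = 1 := by
  simp only [Set.mem_union, Set.mem_neg, Set.mem_insert_iff, Set.mem_singleton_iff]
  decide

theorem add_eight_mem_S₂_iff : ∀ d : ZMod 32, d + 8 ∈ S₂ ↔ d ∈ S₁ := by
  simp only [Set.mem_union, Set.mem_neg, Set.mem_insert_iff, Set.mem_singleton_iff]
  decide

theorem sub_eight_mem_S₂_iff : ∀ d : ZMod 32, d - 8 ∈ S₂ ↔ d ∈ S₁ := by
  simp only [Set.mem_union, Set.mem_neg, Set.mem_insert_iff, Set.mem_singleton_iff]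
  decide

theorem phi_eq_oddShift : phi = oddShift 8 := rfl

theorem sub_mem_iff_phi_sub_mem {E : Set (ZMod 32)} (hE : ∀ t ∈ E, t.val % 2 = 0)
    (u v : ZMod 32) :
    u - v ∈ S₁ ∪ E ↔ phi u - phi v ∈ S₂ ∪ E := by
  have h32 : 2 ∣ 32 := by norm_num
  rw [phi_eq_oddShift]
  rcases Nat.mod_two_eq_zero_or_one (u - v).val with heven | hodd
  · have h1 : u - v ∉ S₁ := fun h => by have := val_mod_two_of_mem_S₁ _ h; omega
    have h2 : u - v ∉ S₂ := fun h => by have := val_mod_two_of_mem_S₂ _ h; omega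
    rw [oddShift_sub_oddShift_of_even h32 8 heven]
    simp only [Set.mem_union, h1, h2, false_or]
  · have hE' : ∀ d, d.val % 2 = 1 → d ∉ E := fun d hd h => by have := hE d h; omega
    have hodd' : (oddShift 8 u - oddShift 8 v).val % 2 = 1 := by
      rw [val_oddShift_sub_oddShift_mod_two h32 (by decide), hodd]
    simp only [Set.mem_union, hE' _ hodd, hE' _ hodd', or_false]
    rcases oddShift_sub_oddShift_of_odd h32 8 hodd with h | h <;> rw [h]
    · exact (add_eight_mem_S₂_iff _).symm
    · exact (sub_eight_mem_S₂_iff _).symm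

theorem stmt16 (T : Set (ZMod 32)) (hT : ∀ t ∈ T, t.val % 2 = 0) :
    Function.Bijective phi ∧
    ∀ u v : ZMod 32,
      (circulantGraph 32 (({1,15} : Set (ZMod 32)) ∪ T)).Adj u v ↔
        (circulantGraph 32 (({7,9} : Set (ZMod 32)) ∪ T)).Adj (phi u) (phi v) := by
  have h32 : 2 ∣ 32 := by norm_num
  have hinj : phi.Injective := oddShift_injective h32 (by decide)
  have hT' : ∀ t ∈ T ∪ -T, t.val % 2 = 0 := by
    rintro t (ht | ht)
    · exact hT t ht
    · rw [← ZMod.val_neg_mod_two h32]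
      exact hT _ ht
  refine ⟨Finite.injective_iff_bijective.mp hinj,
    circulantGraph_adj_iff_adj_of_sub_mem_iff hinj fun u v => ?_⟩
  rw [Set.union_neg, Set.union_neg, Set.union_union_union_comm _ T,
    Set.union_union_union_comm _ T]
  exact sub_mem_iff_phi_sub_mem hT' u v
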